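/- arXiv:2605.21627 — 3 statements merged into one kernel-verified Lean document; each statement's English description precedes it below -/
import Mathlib

section
/- Let G be a finite group of permutations acting on a set X, let S : X → ℝ be any function, and let Z be an X-valued random variable whose distribution is invariant under every π ∈ G (i.e., π(Z) has the same distribution as Z for all π ∈ G). Define the permutation p-value p(x) = (1/|G|) · #{π ∈ G : S(π(x)) ≤ S(x)}. Then for every α ∈ (0,1), P(p(Z) ≤ α) ≤ α. -/
/-!
Fix `x`. Since `G` is a group, the p-value of `π x` (`π ∈ G`) is the normalised rank of
`S (π x)` among the orbit scores `S (σ x)`, `σ ∈ G`, and at most `α |G|` of these scores can have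
normalised rank `≤ α` (all of them lie below the largest one). So for every `x` at most `α |G|`
of the `π ∈ G` send `x` into `{p ≤ α}`; integrating this count and using the invariance of `μ`
under each `π` gives `|G| μ {p ≤ α} ≤ α |G|`.
-/

open MeasureTheory Finset
open scoped ENNReal

theorem Finset.card_filter_card_filter_le_le {ι β : Type*} [LinearOrder β]
    (s : Finset ι) (f : ι → β) {c : ℝ} (hc : 0 ≤ c) :
    (#{i ∈ s | (#{j ∈ s | f j ≤ f i} : ℝ) ≤ c} : ℝ) ≤ c := by
  set B := {i ∈ s | (#{j ∈ s | f j ≤ f i} : ℝ) ≤ c}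
  rcases B.eq_empty_or_nonempty with hB | hB
  · simpa [hB] using hc
  obtain ⟨i₀, hi₀, hmax⟩ := B.exists_max_image f hB
  have hsub : B ⊆ {j ∈ s | f j ≤ f i₀} := fun i hi =>
    mem_filter.mpr ⟨(mem_filter.mp hi).1, hmax i hi⟩
  calc (#B : ℝ) ≤ #{j ∈ s | f j ≤ f i₀} := by exact_mod_cast card_le_card hsub
    _ ≤ c := (mem_filter.mp hi₀).2

theorem Finset.card_filter_mul_right_eq {M : Type*} [Group M] {G : Finset M}
    (hGmul : ∀ π ∈ G, ∀ σ ∈ G, π * σ ∈ G) (hGinv : ∀ π ∈ G, π⁻¹ ∈ G)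
    {π : M} (hπ : π ∈ G) (P : M → Prop) [DecidablePred P] :
    #{σ ∈ G | P (σ * π)} = #{σ ∈ G | P σ} :=
  card_nbij' (· * π) (· * π⁻¹)
    (fun σ hσ => by
      simp only [coe_filter, Set.mem_ofPred_eq] at hσ ⊢
      exact ⟨hGmul σ hσ.1 π hπ, hσ.2⟩)
    (fun σ hσ => by
      simp only [coe_filter, Set.mem_ofPred_eq] at hσ ⊢
      exact ⟨hGmul σ hσ.1 π⁻¹ (hGinv π hπ), by simpa using hσ.2⟩)
    (fun σ _ => by simp) (fun σ _ => by simp)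

open Classical in
theorem MeasureTheory.card_mul_measure_le_of_card_filter_mem_le {ι X : Type*}
    [MeasurableSpace X] {μ : Measure X} (s : Finset ι) (T : ι → X → X)
    (hT : ∀ i ∈ s, Measurable (T i)) (hμ : ∀ i ∈ s, μ.map (T i) = μ)
    {A : Set X} (hA : MeasurableSet A) {c : ℝ≥0∞} (h : ∀ x, (#{i ∈ s | T i x ∈ A} : ℝ≥0∞) ≤ c) :
    #s * μ A ≤ c * μ Set.univ := by
  have hpre : ∀ i ∈ s, MeasurableSet (T i ⁻¹' A) := fun i hi => hA.preimage (hT i hi)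
  calc (#s : ℝ≥0∞) * μ A = ∑ i ∈ s, μ (T i ⁻¹' A) := by
        rw [← nsmul_eq_mul, ← sum_const]
        exact sum_congr rfl fun i hi => by rw [← Measure.map_apply (hT i hi) hA, hμ i hi]
    _ = ∫⁻ x, ∑ i ∈ s, (T i ⁻¹' A).indicator 1 x ∂μ := by
        rw [lintegral_finsetSum _ fun i hi => measurable_one.indicator (hpre i hi)]
        exact sum_congr rfl fun i hi => (lintegral_indicator_one (hpre i hi)).symm
    _ = ∫⁻ x, (#{i ∈ s | T i x ∈ A} : ℝ≥0∞) ∂μ := by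
        simp only [Set.indicator_apply, Set.mem_preimage, Pi.one_apply, sum_boole]
    _ ≤ ∫⁻ _, c ∂μ := lintegral_mono h
    _ = c * μ Set.univ := lintegral_const c

section PValue

variable {M X β : Type*} [Group M] [MulAction M X] [LinearOrder β]

noncomputable def pValue (G : Finset M) (S : X → β) (x : X) : ℝ :=
  (#{π ∈ G | S (π • x) ≤ S x} : ℝ) / #G

theorem pValue_smul {G : Finset M} (hGmul : ∀ π ∈ G, ∀ σ ∈ G, π * σ ∈ G)
    (hGinv : ∀ π ∈ G, π⁻¹ ∈ G) (S : X → β) {π : M} (hπ : π ∈ G) (x : X) :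
    pValue G S (π • x) = (#{σ ∈ G | S (σ • x) ≤ S (π • x)} : ℝ) / #G := by
  simp only [pValue, smul_smul]
  rw [card_filter_mul_right_eq hGmul hGinv hπ fun σ => S (σ • x) ≤ S (π • x)]

theorem card_filter_pValue_smul_le {G : Finset M} (hGmul : ∀ π ∈ G, ∀ σ ∈ G, π * σ ∈ G)
    (hGinv : ∀ π ∈ G, π⁻¹ ∈ G) (S : X → β) {α : ℝ} (hα : 0 ≤ α) (x : X) :
    (#{π ∈ G | pValue G S (π • x) ≤ α} : ℝ) ≤ α * #G := by
  rcases G.eq_empty_or_nonempty with rfl | hG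
  · simp
  have hrank : {π ∈ G | pValue G S (π • x) ≤ α}
      = {π ∈ G | (#{σ ∈ G | S (σ • x) ≤ S (π • x)} : ℝ) ≤ α * #G} :=
    filter_congr fun π hπ => by
      rw [pValue_smul hGmul hGinv S hπ, div_le_iff₀ (by exact_mod_cast hG.card_pos)]
  rw [hrank]
  exact_mod_cast card_filter_card_filter_le_le G (fun σ => S (σ • x)) (by positivity)

theorem measurable_pValue [MeasurableSpace X] {G : Finset M}
    (hGmeas : ∀ π ∈ G, Measurable (π • · : X → X)) {S : X → ℝ} (hS : Measurable S) :
    Measurable (pValue G S) := by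
  have hcard : Measurable fun x => #{π ∈ G | S (π • x) ≤ S x} := by
    simp only [card_filter]
    exact measurable_sum _ fun π hπ =>
      Measurable.ite (measurableSet_le (hS.comp (hGmeas π hπ)) hS) measurable_const
        measurable_const
  exact (measurable_from_nat.comp hcard).div_const _

end PValue

/-- Validity of permutation p-values under a finite group of distribution-preserving
permutations: `P(p(Z) ≤ α) ≤ α`. -/
theorem stmt0 {X : Type*} [MeasurableSpace X]
    (G : Finset (Equiv.Perm X))
    (hG1 : (1 : Equiv.Perm X) ∈ G)
    (hGmul : ∀ π ∈ G, ∀ σ ∈ G, π * σ ∈ G)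
    (hGinv : ∀ π ∈ G, π⁻¹ ∈ G)
    (hGmeas : ∀ π ∈ G, Measurable (π : X → X))
    (S : X → ℝ) (hS : Measurable S)
    (μ : Measure X) [IsProbabilityMeasure μ]
    (hinv : ∀ π ∈ G, μ.map (π : X → X) = μ)
    (α : ℝ) (hα : α ∈ Set.Ioo (0 : ℝ) 1) :
    μ {x | ((G.filter fun π => S (π x) ≤ S x).card : ℝ) / (G.card : ℝ) ≤ α}
      ≤ ENNReal.ofReal α := by
  change μ {x | pValue G S x ≤ α} ≤ _
  have hA : MeasurableSet {x | pValue G S x ≤ α} :=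
    measurableSet_le (measurable_pValue hGmeas hS) measurable_const
  have hbound := card_mul_measure_le_of_card_filter_mem_le G (fun π => π) hGmeas hinv hA
    fun x => by
      rw [← ENNReal.ofReal_natCast]
      exact ENNReal.ofReal_le_ofReal (by
        convert card_filter_pValue_smul_le hGmul hGinv S hα.1.le x using 4
        exact Iff.rfl)
  have hG : (#G : ℝ≥0∞) ≠ 0 := Nat.cast_ne_zero.mpr (card_ne_zero_of_mem hG1)
  rw [measure_univ, mul_one, ENNReal.ofReal_mul hα.1.le, ENNReal.ofReal_natCast,
    mul_comm (ENNReal.ofReal α)] at hbound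
  exact (ENNReal.mul_le_mul_iff_right hG (ENNReal.natCast_ne_top _)).mp hbound
end

section
/- Let x, y₁, …, y_M be real numbers and define p = (1 + #{m ∈ [M] : yₘ ≤ x}) / (M + 1). If (x, y₁, …, y_M) is an exchangeable random vector (its joint distribution is invariant under all permutations of the M+1 coordinates), then for every α ∈ (0,1), P(p ≤ α) ≤ α. -/
/-!
Let `rank v i` be the number of coordinates of `v` that are at most `v i`; the numerator of
`p` is `rank W 0`. For every realisation, at most `k` indices have rank at most `k` (they all
lie weakly below the largest of them). Exchangeability makes the events `rank W i ≤ k` equally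
likely, so summing over the `M + 1` indices gives `(M + 1) P(rank W 0 ≤ k) ≤ k`; taking
`k = ⌊α (M + 1)⌋` yields `P(p ≤ α) ≤ α`.
-/

open MeasureTheory Finset ENNReal

namespace ConformalRank

variable {ι α : Type*} [Fintype ι] [LinearOrder α]

def rank (v : ι → α) (i : ι) : ℕ :=
  #{j | v j ≤ v i}

theorem rank_comp_perm (v : ι → α) (σ : Equiv.Perm ι) (i : ι) :
    rank (v ∘ σ) i = rank v (σ i) := by
  simp only [rank, card_filter, Function.comp_apply]
  exact Equiv.sum_comp σ (fun j => if v j ≤ v (σ i) then 1 else 0)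

theorem card_rank_le_le (v : ι → α) (k : ℕ) : #{i | rank v i ≤ k} ≤ k := by
  obtain h | hne := (univ.filter fun i => rank v i ≤ k).eq_empty_or_nonempty
  · simp [h]
  obtain ⟨i, hi, hmax⟩ := exists_max_image _ v hne
  calc #{i | rank v i ≤ k} ≤ rank v i := card_le_card fun j hj => by simpa using hmax j hj
    _ ≤ k := (mem_filter.mp hi).2

theorem rank_zero_eq {M : ℕ} (v : Fin (M + 1) → α) :
    rank v 0 = 1 + #{m : Fin M | v m.succ ≤ v 0} := by
  rw [rank, card_filter, card_filter, Fin.sum_univ_succ, if_pos le_rfl]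

section Measure

variable [TopologicalSpace α] [MeasurableSpace α] [OpensMeasurableSpace α]
  [OrderClosedTopology α] [SecondCountableTopology α]

theorem measurableSet_rank_le (i : ι) (k : ℕ) : MeasurableSet {v : ι → α | rank v i ≤ k} := by
  have : Measurable fun v : ι → α => rank v i := by
    simp only [rank, card_filter]
    exact Finset.measurable_sum _ fun j _ => Measurable.ite
      (measurableSet_le (measurable_pi_apply j) (measurable_pi_apply i))
      measurable_const measurable_const
  exact measurableSet_le this measurable_const

variable {μ : Measure (ι → α)}

theorem measure_rank_le_eq (hμ : ∀ σ : Equiv.Perm ι, μ.map (· ∘ σ) = μ) (i j : ι) (k : ℕ) :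
    μ {v | rank v i ≤ k} = μ {v | rank v j ≤ k} := by
  classical
  have hσ : Measurable fun v : ι → α => v ∘ Equiv.swap j i :=
    measurable_pi_lambda _ fun m => measurable_pi_apply _
  calc μ {v | rank v i ≤ k} = μ.map (· ∘ Equiv.swap j i) {v | rank v i ≤ k} := by rw [hμ]
    _ = μ {v | rank v j ≤ k} := by
      rw [Measure.map_apply hσ (measurableSet_rank_le i k)]
      simp only [Set.preimage_ofPred_eq, rank_comp_perm, Equiv.swap_apply_right]

theorem card_mul_measure_rank_le_le (hμ : ∀ σ : Equiv.Perm ι, μ.map (· ∘ σ) = μ)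
    (i : ι) (k : ℕ) : Fintype.card ι * μ {v | rank v i ≤ k} ≤ k * μ Set.univ := by
  calc Fintype.card ι * μ {v | rank v i ≤ k}
      = ∑ j : ι, μ {v | rank v j ≤ k} := by
        simp [measure_rank_le_eq hμ _ i]
    _ = ∫⁻ v, ∑ j : ι, {v | rank v j ≤ k}.indicator 1 v ∂μ := by
        rw [lintegral_finsetSum _ fun j _ => measurable_one.indicator (measurableSet_rank_le j k)]
        simp only [lintegral_indicator_one (measurableSet_rank_le _ k)]
    _ = ∫⁻ v, (#{j | rank v j ≤ k} : ℝ≥0∞) ∂μ := by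
        simp only [card_filter, Nat.cast_sum, Set.indicator_apply, Set.mem_ofPred_eq,
          Pi.one_apply, Nat.cast_ite, Nat.cast_one, Nat.cast_zero]
    _ ≤ ∫⁻ _, (k : ℝ≥0∞) ∂μ := lintegral_mono fun v => Nat.cast_le.mpr (card_rank_le_le v k)
    _ = k * μ Set.univ := lintegral_const _

end Measure

end ConformalRank

theorem ENNReal.le_ofReal_of_natCast_mul_le {x : ℝ≥0∞} {n k : ℕ} {a : ℝ} (hn : n ≠ 0)
    (h : n * x ≤ k) (hk : (k : ℝ) ≤ a * n) : x ≤ ENNReal.ofReal a := by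
  have ha : 0 ≤ a := nonneg_of_mul_nonneg_left ((Nat.cast_nonneg k).trans hk)
    (by exact_mod_cast Nat.pos_of_ne_zero hn)
  refine (ENNReal.mul_le_mul_iff_right (by exact_mod_cast hn) (natCast_ne_top n)).mp ?_
  calc n * x ≤ ENNReal.ofReal k := by simpa using h
    _ ≤ ENNReal.ofReal (a * n) := ENNReal.ofReal_le_ofReal hk
    _ = n * ENNReal.ofReal a := by rw [ENNReal.ofReal_mul ha, mul_comm, ofReal_natCast]

open ConformalRank in
/-- Validity of Monte Carlo conformal p-values: if `(x, y₁, …, y_M)` is exchangeable,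
then `p = (1 + #{m : yₘ ≤ x})/(M+1)` satisfies `P(p ≤ α) ≤ α`. Here `W ω 0` plays the
role of `x` and `W ω m.succ` of `yₘ`. -/
theorem stmt1 {Ω : Type*} [MeasurableSpace Ω]
    (P : Measure Ω) [IsProbabilityMeasure P]
    (M : ℕ) (W : Ω → Fin (M + 1) → ℝ) (hW : Measurable W)
    (hexch : ∀ σ : Equiv.Perm (Fin (M + 1)),
      P.map (fun ω => W ω ∘ σ) = P.map W)
    (α : ℝ) (hα : α ∈ Set.Ioo (0 : ℝ) 1) :
    P {ω | (1 + ((Finset.univ.filter fun m : Fin M => W ω m.succ ≤ W ω 0).card : ℝ))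
        / (M + 1 : ℝ) ≤ α} ≤ ENNReal.ofReal α := by
  have hν : ∀ σ : Equiv.Perm (Fin (M + 1)), (P.map W).map (· ∘ σ) = P.map W := fun σ => by
    rw [Measure.map_map (by fun_prop) hW, ← hexch σ]
    rfl
  set k := ⌊α * (M + 1)⌋₊
  have hevent : {ω | (1 + ((Finset.univ.filter fun m : Fin M => W ω m.succ ≤ W ω 0).card : ℝ))
      / (M + 1 : ℝ) ≤ α} = W ⁻¹' {v | rank v 0 ≤ k} := by
    ext ω
    rw [Set.mem_preimage, Set.mem_ofPred_eq, Set.mem_ofPred_eq, rank_zero_eq,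
      Nat.le_floor_iff (by positivity [hα.1.le]), div_le_iff₀ (by positivity)]
    push_cast
    rfl
  have := Measure.isProbabilityMeasure_map (μ := P) hW.aemeasurable
  have hbound := card_mul_measure_rank_le_le hν 0 k
  rw [Fintype.card_fin, measure_univ, mul_one] at hbound
  rw [hevent, ← Measure.map_apply hW (measurableSet_rank_le 0 k)]
  exact ENNReal.le_ofReal_of_natCast_mul_le M.succ_ne_zero hbound
    (by push_cast; exact Nat.floor_le (by positivity [hα.1.le]))
end

section
/- Let Z, Z₁, …, Z_M be real-valued random variables such that (Z, Z₁, …, Z_M) is exchangeable and the Zᵢ are almost surely distinct, and let U ~ Uniform(0,1) be independent of them. Define p = (1/(M+1))·(#{m : Zₘ < Z} + U·(1 + #{m : Zₘ = Z})). Then p is uniformly distributed on (0,1); in particular P(p ≤ α) = α for every α ∈ (0,1). -/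
open MeasureTheory Finset
open scoped ENNReal

noncomputable def rnk {M : ℕ} (w : Fin (M + 1) → ℝ) (i : Fin (M + 1)) : ℕ :=
  (Finset.univ.filter fun j => w j < w i).card

section Aux
variable {M : ℕ}

lemma rnk_le (w : Fin (M + 1) → ℝ) (i : Fin (M + 1)) : rnk w i ≤ M := by
  have h : (Finset.univ.filter fun j => w j < w i) ⊆ Finset.univ.erase i := by
    intro j hj
    simp only [mem_filter, mem_univ, true_and] at hj
    exact Finset.mem_erase.2 ⟨fun h => absurd (h ▸ hj) (lt_irrefl _), mem_univ _⟩
  have := Finset.card_le_card h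
  simpa [rnk, Finset.card_erase_of_mem, Fintype.card_fin] using this

lemma rnk_injective {w : Fin (M + 1) → ℝ} (hw : Function.Injective w) :
    Function.Injective (rnk w) := by
  have key : ∀ i j : Fin (M + 1), w i < w j → rnk w i < rnk w j := by
    intro i j hij
    apply Finset.card_lt_card
    constructor
    · intro l hl
      simp only [mem_filter, mem_univ, true_and] at hl ⊢
      exact hl.trans hij
    · intro hsub
      have : i ∈ Finset.univ.filter fun l => w l < w j := by simp [hij]
      have := hsub this
      simp at this
  intro i j hij
  by_contra hne
  rcases lt_trichotomy (w i) (w j) with h | h | h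
  · exact absurd hij (Nat.ne_of_lt (key _ _ h))
  · exact hne (hw h)
  · exact absurd hij.symm (Nat.ne_of_lt (key _ _ h))

lemma rnk_exists {w : Fin (M + 1) → ℝ} (hw : Function.Injective w) {k : ℕ} (hk : k ≤ M) :
    ∃ i, rnk w i = k := by
  let f : Fin (M + 1) → Fin (M + 1) := fun i => ⟨rnk w i, Nat.lt_succ_of_le (rnk_le w i)⟩
  have hf : Function.Injective f := by
    intro i j h
    exact rnk_injective hw (by simpa [f, Fin.ext_iff] using h)
  have hsurj := Finite.surjective_of_injective hf
  obtain ⟨i, hi⟩ := hsurj ⟨k, Nat.lt_succ_of_le hk⟩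
  exact ⟨i, by simpa [f, Fin.ext_iff] using hi⟩

lemma rnk_comp (w : Fin (M + 1) → ℝ) (σ : Equiv.Perm (Fin (M + 1))) (i : Fin (M + 1)) :
    rnk (w ∘ σ) i = rnk w (σ i) := by
  unfold rnk
  apply Finset.card_bij (fun j _ => σ j)
  · intro a ha; simpa using (by simpa using ha : w (σ a) < w (σ i))
  · intro a _ b _ h; exact σ.injective h
  · intro b hb
    refine ⟨σ.symm b, ?_, by simp⟩
    simp only [mem_filter, mem_univ, true_and] at hb ⊢
    simpa using hb

lemma measurable_rnk (i : Fin (M + 1)) : Measurable fun w : Fin (M + 1) → ℝ => rnk w i := by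
  unfold rnk
  simp only [Finset.card_filter]
  exact Finset.measurable_sum _ fun j _ =>
    Measurable.ite (measurableSet_lt (measurable_pi_apply j) (measurable_pi_apply i))
      measurable_const measurable_const

lemma measurableSet_inj : MeasurableSet {w : Fin (M + 1) → ℝ | Function.Injective w} := by
  have : {w : Fin (M + 1) → ℝ | Function.Injective w}
      = ⋂ (i) (j) (_ : i ≠ j), {w | w i = w j}ᶜ := by
    ext w
    simp only [Set.mem_iInter, Set.mem_compl_iff, Set.mem_setOf_eq]
    constructor
    · intro hw i j hne h; exact hne (hw h)
    · intro h i j hij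
      by_contra hne
      exact h i j hne hij
  rw [this]
  exact MeasurableSet.iInter fun i => MeasurableSet.iInter fun j => MeasurableSet.iInter fun _ =>
    (measurableSet_eq_fun (measurable_pi_apply i) (measurable_pi_apply j)).compl

lemma inj_ae (ν : Measure (Fin (M + 1) → ℝ))
    (hdist : ∀ i j : Fin (M + 1), i ≠ j → ν {w | w i = w j} = 0) :
    ν {w : Fin (M + 1) → ℝ | Function.Injective w}ᶜ = 0 := by
  have hsub : {w : Fin (M + 1) → ℝ | Function.Injective w}ᶜ
      ⊆ ⋃ (i) (j) (_ : i ≠ j), {w : Fin (M + 1) → ℝ | w i = w j} := by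
    intro w hw
    simp only [Set.mem_compl_iff, Set.mem_setOf_eq, Function.Injective] at hw
    push_neg at hw
    obtain ⟨i, j, hij, hne⟩ := hw
    exact Set.mem_iUnion.2 ⟨i, Set.mem_iUnion.2 ⟨j, Set.mem_iUnion.2 ⟨hne, hij⟩⟩⟩
  refine measure_mono_null hsub ?_
  exact measure_iUnion_null fun i => measure_iUnion_null fun j => measure_iUnion_null fun hne =>
    hdist i j hne

lemma rank_uniform (ν : Measure (Fin (M + 1) → ℝ)) [IsProbabilityMeasure ν]
    (hexch : ∀ σ : Equiv.Perm (Fin (M + 1)), ν.map (fun w => w ∘ σ) = ν)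
    (hdist : ∀ i j : Fin (M + 1), i ≠ j → ν {w | w i = w j} = 0)
    {k : ℕ} (hk : k ≤ M) :
    ν {w | Function.Injective w ∧ rnk w 0 = k} = ((M + 1 : ℕ) : ℝ≥0∞)⁻¹ := by
  set B : Fin (M + 1) → Set (Fin (M + 1) → ℝ) :=
    fun i => {w | Function.Injective w ∧ rnk w i = k} with hB
  have hmeas : ∀ i, MeasurableSet (B i) := fun i =>
    measurableSet_inj.inter ((measurable_rnk i) (measurableSet_singleton k))
  have hcomp_meas : ∀ σ : Equiv.Perm (Fin (M + 1)),
      Measurable fun w : Fin (M + 1) → ℝ => w ∘ σ := fun σ =>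
    measurable_pi_lambda _ fun i => measurable_pi_apply (σ i)
  have heq : ∀ i, ν (B i) = ν (B 0) := by
    intro i
    have h1 : ν (B 0) = ν ((fun w : Fin (M + 1) → ℝ => w ∘ (Equiv.swap 0 i)) ⁻¹' (B 0)) := by
      conv_lhs => rw [← hexch (Equiv.swap 0 i)]
      rw [Measure.map_apply (hcomp_meas _) (hmeas 0)]
    have h2 : (fun w : Fin (M + 1) → ℝ => w ∘ (Equiv.swap 0 i)) ⁻¹' (B 0) = B i := by
      ext w
      simp only [Set.mem_preimage, hB, Set.mem_setOf_eq]
      rw [rnk_comp, Equiv.injective_comp, Equiv.swap_apply_left]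
    rw [h1, h2]
  have hdisj : Pairwise (Function.onFun Disjoint B) := by
    intro i j hij
    refine Set.disjoint_left.2 fun w hwi hwj => ?_
    exact hij (rnk_injective hwi.1 (hwi.2.trans hwj.2.symm))
  have hunion : (⋃ i, B i) = {w | Function.Injective w} := by
    ext w
    simp only [Set.mem_iUnion, hB, Set.mem_setOf_eq]
    constructor
    · rintro ⟨i, hi, _⟩; exact hi
    · intro hw; obtain ⟨i, hi⟩ := rnk_exists hw hk; exact ⟨i, hw, hi⟩
  have hsum : ∑ i : Fin (M + 1), ν (B i) = 1 := by
    rw [← tsum_fintype (L := .unconditional _), ← measure_iUnion hdisj hmeas, hunion]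
    have h0 := inj_ae ν hdist
    have h1 := measure_add_measure_compl (μ := ν) (measurableSet_inj (M := M))
    rw [h0, add_zero, measure_univ] at h1
    exact h1
  have hs2 : ∑ i : Fin (M + 1), ν (B i) = ((M + 1 : ℕ) : ℝ≥0∞) * ν (B 0) := by
    rw [Finset.sum_congr rfl fun i _ => heq i, Finset.sum_const, Finset.card_univ,
      Fintype.card_fin, nsmul_eq_mul]
  have hx : ((M + 1 : ℕ) : ℝ≥0∞) * ν (B 0) = 1 := by rw [← hs2]; exact hsum
  have h0 : ((M + 1 : ℕ) : ℝ≥0∞) ≠ 0 := by simp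
  have htop : ((M + 1 : ℕ) : ℝ≥0∞) ≠ ⊤ := by simp
  calc ν (B 0) = ((M + 1 : ℕ) : ℝ≥0∞)⁻¹ * (((M + 1 : ℕ) : ℝ≥0∞) * ν (B 0)) := by
        rw [← mul_assoc, ENNReal.inv_mul_cancel h0 htop, one_mul]
    _ = ((M + 1 : ℕ) : ℝ≥0∞)⁻¹ := by rw [hx, mul_one]

lemma clamp_sum {x : ℝ} (hx0 : 0 ≤ x) (hx1 : x ≤ M + 1) :
    ∑ k ∈ Finset.range (M + 1), min (max (x - k) 0) 1 = x := by
  have hterm : ∀ k : ℕ, min (max (x - k) 0) 1 = min x (k + 1 : ℕ) - min x (k : ℕ) := by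
    intro k
    rcases le_total x k with h | h
    · rw [max_eq_right (by linarith), min_eq_left zero_le_one,
        min_eq_left h, min_eq_left (by push_cast; linarith)]
      ring
    · rw [max_eq_left (by linarith), min_eq_right h]
      rcases le_total x (k + 1 : ℕ) with h2 | h2
      · push_cast at h2
        rw [min_eq_left (by push_cast; linarith : x ≤ ((k + 1 : ℕ) : ℝ)),
          min_eq_left (by linarith : x - (k : ℝ) ≤ 1)]
      · push_cast at h2
        rw [min_eq_right (by push_cast; linarith : ((k + 1 : ℕ) : ℝ) ≤ x),
          min_eq_right (by linarith : (1 : ℝ) ≤ x - k)]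
        push_cast; ring
  calc ∑ k ∈ Finset.range (M + 1), min (max (x - k) 0) 1
      = ∑ k ∈ Finset.range (M + 1), (min x (k + 1 : ℕ) - min x (k : ℕ)) :=
        Finset.sum_congr rfl fun k _ => hterm k
    _ = min x (M + 1 : ℕ) - min x (0 : ℕ) := Finset.sum_range_sub (fun k => min x (k : ℕ)) (M + 1)
    _ = x := by
        rw [Nat.cast_zero, min_eq_right hx0, min_eq_left (by push_cast; linarith)]
        ring

lemma uniform_cdf (c : ℝ) :
    volume.restrict (Set.Ioo (0 : ℝ) 1) (Set.Iic c) = ENNReal.ofReal (min (max c 0) 1) := by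
  rw [Measure.restrict_apply measurableSet_Iic]
  rcases le_total c 0 with h | h
  · have : Set.Iic c ∩ Set.Ioo (0 : ℝ) 1 = ∅ := by
      ext x; simp only [Set.mem_inter_iff, Set.mem_Iic, Set.mem_Ioo, Set.mem_empty_iff_false,
        iff_false, not_and]
      intro hx h1; linarith
    rw [this, measure_empty, max_eq_right h, min_eq_left zero_le_one]
    simp
  · rw [max_eq_left h]
    rcases le_or_gt 1 c with h1 | h1
    · have : Set.Iic c ∩ Set.Ioo (0 : ℝ) 1 = Set.Ioo 0 1 := by
        ext x; simp only [Set.mem_inter_iff, Set.mem_Iic, Set.mem_Ioo]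
        constructor
        · exact fun hx => hx.2
        · exact fun hx => ⟨by linarith [hx.2], hx⟩
      rw [this, min_eq_right h1, Real.volume_Ioo]
      norm_num
    · have : Set.Iic c ∩ Set.Ioo (0 : ℝ) 1 = Set.Ioc 0 c := by
        ext x; simp only [Set.mem_inter_iff, Set.mem_Iic, Set.mem_Ioo, Set.mem_Ioc]
        constructor
        · exact fun hx => ⟨hx.2.1, hx.1⟩
        · rintro ⟨hx1, hx2⟩
          exact ⟨hx2, hx1, by linarith⟩
      rw [this, min_eq_left (le_of_lt h1), Real.volume_Ioc]
      norm_num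

lemma card_succ_filter (w : Fin (M + 1) → ℝ) :
    (Finset.univ.filter fun m : Fin M => w m.succ < w 0).card = rnk w 0 := by
  unfold rnk
  apply Finset.card_bij (fun m _ => Fin.succ m)
  · intro a ha
    simp only [mem_filter, mem_univ, true_and] at ha ⊢
    exact ha
  · intro a _ b _ h; exact Fin.succ_injective _ h
  · intro j hj
    simp only [mem_filter, mem_univ, true_and] at hj
    have hj0 : j ≠ 0 := fun h => absurd (h ▸ hj) (lt_irrefl _)
    obtain ⟨m, hm⟩ := Fin.exists_succ_eq.2 hj0
    exact ⟨m, by simp [mem_filter, hm, hj], hm⟩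

lemma ties_empty {w : Fin (M + 1) → ℝ} (hw : Function.Injective w) :
    (Finset.univ.filter fun m : Fin M => w m.succ = w 0) = ∅ := by
  rw [Finset.filter_eq_empty_iff]
  intro m _ h
  exact Fin.succ_ne_zero m (hw h)

end Aux

/-- Exactness of randomized (smoothed) conformal p-values: with almost surely distinct
exchangeable scores `W ω 0, W ω 1, …, W ω M` and an independent uniform tie-breaking
variable `U`, the randomized p-value is exactly uniform: `P(p ≤ α) = α`. -/
theorem stmt6 {Ω : Type*} [MeasurableSpace Ω]
    (P : Measure Ω) [IsProbabilityMeasure P]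
    (M : ℕ) (W : Ω → Fin (M + 1) → ℝ) (U : Ω → ℝ)
    (hW : Measurable W) (hU : Measurable U)
    (hexch : ∀ σ : Equiv.Perm (Fin (M + 1)),
      P.map (fun ω => W ω ∘ σ) = P.map W)
    (hdistinct : ∀ i j : Fin (M + 1), i ≠ j → P {ω | W ω i = W ω j} = 0)
    (hUunif : P.map U = volume.restrict (Set.Ioo (0 : ℝ) 1))
    (hindep : ProbabilityTheory.IndepFun U W P)
    (α : ℝ) (hα : α ∈ Set.Ioo (0 : ℝ) 1) :
    P {ω | (1 / (M + 1 : ℝ)) *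
        (((Finset.univ.filter fun m : Fin M => W ω m.succ < W ω 0).card : ℝ)
          + U ω * (1 + ((Finset.univ.filter fun m : Fin M => W ω m.succ = W ω 0).card : ℝ)))
        ≤ α} = ENNReal.ofReal α := by
  obtain ⟨hα0, hα1⟩ := hα
  set ν : Measure (Fin (M + 1) → ℝ) := P.map W with hν
  haveI : IsProbabilityMeasure ν := Measure.isProbabilityMeasure_map hW.aemeasurable
  have hcomp_meas : ∀ σ : Equiv.Perm (Fin (M + 1)),
      Measurable fun w : Fin (M + 1) → ℝ => w ∘ σ := fun σ =>
    measurable_pi_lambda _ fun i => measurable_pi_apply (σ i)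
  have hνexch : ∀ σ : Equiv.Perm (Fin (M + 1)), ν.map (fun w => w ∘ σ) = ν := by
    intro σ
    rw [hν, Measure.map_map (hcomp_meas σ) hW]
    exact hexch σ
  have hνdist : ∀ i j : Fin (M + 1), i ≠ j → ν {w | w i = w j} = 0 := by
    intro i j hij
    rw [hν, Measure.map_apply hW
      (measurableSet_eq_fun (measurable_pi_apply i) (measurable_pi_apply j))]
    exact hdistinct i j hij
  set c : ℕ → ℝ := fun k => (M + 1 : ℝ) * α - k with hc
  set B : ℕ → Set (Fin (M + 1) → ℝ) :=
    fun k => {w | Function.Injective w ∧ rnk w 0 = k} with hBdef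
  set S : ℕ → Set Ω := fun k => (U ⁻¹' Set.Iic (c k)) ∩ (W ⁻¹' B k) with hS
  set E : Set Ω := {ω | (1 / (M + 1 : ℝ)) *
        (((Finset.univ.filter fun m : Fin M => W ω m.succ < W ω 0).card : ℝ)
          + U ω * (1 + ((Finset.univ.filter fun m : Fin M => W ω m.succ = W ω 0).card : ℝ)))
        ≤ α} with hE
  set D : Set Ω := W ⁻¹' {w | Function.Injective w} with hD
  have hBmeas : ∀ k, MeasurableSet (B k) := fun k =>
    measurableSet_inj.inter ((measurable_rnk 0) (measurableSet_singleton k))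
  have hMpos : (0 : ℝ) < M + 1 := by positivity
  -- pointwise characterization on the injectivity event
  have hpoint : ∀ ω, Function.Injective (W ω) →
      (ω ∈ E ↔ U ω ≤ c (rnk (W ω) 0)) := by
    intro ω hinj
    rw [hE]
    simp only [Set.mem_setOf_eq, card_succ_filter, ties_empty hinj, Finset.card_empty,
      Nat.cast_zero, add_zero, mul_one]
    rw [div_mul_eq_mul_div, one_mul, div_le_iff₀ hMpos]
    simp only [hc]
    constructor <;> intro h <;> linarith
  -- E agrees a.e. with E ∩ D
  have hPDc : P Dᶜ = 0 := by
    rw [hD, ← Set.preimage_compl, ← Measure.map_apply hW measurableSet_inj.compl, ← hν]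
    exact inj_ae ν hνdist
  have hae : P E = P (E ∩ D) := by
    refine le_antisymm ?_ (measure_mono Set.inter_subset_left)
    calc P E ≤ P ((E ∩ D) ∪ Dᶜ) := by
          refine measure_mono fun ω h => ?_
          by_cases hd : ω ∈ D
          · exact Or.inl ⟨h, hd⟩
          · exact Or.inr hd
      _ ≤ P (E ∩ D) + P Dᶜ := measure_union_le _ _
      _ = P (E ∩ D) := by rw [hPDc, add_zero]
  -- decomposition
  have hcover : E ∩ D = ⋃ k ∈ Finset.range (M + 1), S k := by
    ext ω
    simp only [Set.mem_inter_iff, Set.mem_iUnion, Finset.mem_range, hS, Set.mem_preimage,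
      Set.mem_Iic, hD, hBdef, Set.mem_setOf_eq]
    constructor
    · rintro ⟨hωE, hωD⟩
      refine ⟨rnk (W ω) 0, Nat.lt_succ_of_le (rnk_le _ _), ?_, hωD, rfl⟩
      exact (hpoint ω hωD).1 hωE
    · rintro ⟨k, _, hU1, hinj, hrk⟩
      refine ⟨?_, hinj⟩
      rw [hpoint ω hinj, hrk]
      exact hU1
  have hSmeas : ∀ k ∈ Finset.range (M + 1), MeasurableSet (S k) := fun k _ =>
    (hU measurableSet_Iic).inter (hW (hBmeas k))
  have hSdisj : Set.PairwiseDisjoint ↑(Finset.range (M + 1)) S := by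
    intro k _ l _ hkl
    refine Set.disjoint_left.2 fun ω hωk hωl => ?_
    rw [hS] at hωk hωl
    exact hkl (hωk.2.2.symm.trans hωl.2.2)
  -- measure of each piece
  have hpiece : ∀ k ∈ Finset.range (M + 1),
      P (S k) = ENNReal.ofReal (min (max (c k) 0) 1) * ((M + 1 : ℕ) : ℝ≥0∞)⁻¹ := by
    intro k hk
    rw [hS]
    rw [hindep.measure_inter_preimage_eq_mul _ _ measurableSet_Iic (hBmeas k)]
    congr 1
    · rw [← Measure.map_apply hU measurableSet_Iic, hUunif, uniform_cdf]
    · rw [← Measure.map_apply hW (hBmeas k), ← hν]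
      exact rank_uniform ν hνexch hνdist (Nat.lt_succ_iff.1 (Finset.mem_range.1 hk))
  -- put everything together
  calc P E = P (E ∩ D) := hae
    _ = P (⋃ k ∈ Finset.range (M + 1), S k) := by rw [hcover]
    _ = ∑ k ∈ Finset.range (M + 1), P (S k) := measure_biUnion_finset hSdisj hSmeas
    _ = ∑ k ∈ Finset.range (M + 1),
          ENNReal.ofReal (min (max (c k) 0) 1) * ((M + 1 : ℕ) : ℝ≥0∞)⁻¹ :=
        Finset.sum_congr rfl hpiece
    _ = (∑ k ∈ Finset.range (M + 1), ENNReal.ofReal (min (max (c k) 0) 1))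
          * ((M + 1 : ℕ) : ℝ≥0∞)⁻¹ := by rw [Finset.sum_mul]
    _ = ENNReal.ofReal ((M + 1 : ℝ) * α) * ((M + 1 : ℕ) : ℝ≥0∞)⁻¹ := by
        rw [← ENNReal.ofReal_sum_of_nonneg (fun k _ => le_min (le_max_right _ _) zero_le_one)]
        congr 1
        have := clamp_sum (M := M) (x := (M + 1 : ℝ) * α)
          (by positivity) (by nlinarith)
        rw [← this]
    _ = ENNReal.ofReal α := by
        rw [ENNReal.ofReal_mul (le_of_lt hMpos)]
        have : ENNReal.ofReal ((M + 1 : ℝ)) = ((M + 1 : ℕ) : ℝ≥0∞) := by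
          rw [← ENNReal.ofReal_natCast]
          norm_num
        rw [this, mul_comm (((M + 1 : ℕ) : ℝ≥0∞)) _, mul_assoc,
          ENNReal.mul_inv_cancel (by simp) (by simp), mul_one]
end
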